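/- There is a universal constant c₀ such that the following holds. Let H be a digraph with nonnegative edge lengths on n ≥ 2 vertices, let Δ > 0, let Q be a shortest path in H of length at most Δ, and let C be the random cutset produced by procedure Path-Quasipartition(H,Q,Δ). Then with probability 1, for all x,y ∈ V(H): if there exists a directed path P from x to y in H∖C that shares at least one vertex with Q, then d_H(x,y) ≤ c₀·Δ·log n. -/

import Mathlib

open scoped ENNReal NNReal
open MeasureTheory

/-- A digraph on a vertex type `V`: an adjacency (edge) relation together with a
nonnegative length for each edge. -/
structure WDigraph (V : Type) where
  Adj : V → V → Prop
  len : V → V → ℝ≥0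

namespace WDigraph

variable {V : Type}

/-- `G.IsWalk u v p` : `p` is the list of vertices of a directed walk from `u` to `v` in `G`. -/
def IsWalk (G : WDigraph V) (u v : V) (p : List V) : Prop :=
  p.Chain' G.Adj ∧ p.head? = some u ∧ p.getLast? = some v

/-- The total length of a walk, given by its list of vertices. -/
def walkLen (G : WDigraph V) (p : List V) : ℝ≥0 :=
  ((p.zip p.tail).map fun e => G.len e.1 e.2).sum

/-- The shortest-path quasimetric of `G`. -/
noncomputable def dist (G : WDigraph V) (u v : V) : ℝ≥0∞ :=
  ⨅ (p : List V) (_ : G.IsWalk u v p), (G.walkLen p : ℝ≥0∞)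

/-- `v` is reachable from `u` in `G` after deleting the edges in `F`. -/
def ReachAvoiding (G : WDigraph V) (F : Set (V × V)) (u v : V) : Prop :=
  ∃ p : List V, G.IsWalk u v p ∧ ∀ e ∈ p.zip p.tail, e ∉ F

/-- The ball of radius `ρ` (a real number) around `v`. -/
noncomputable def ball (G : WDigraph V) (v : V) (ρ : ℝ) : Set V :=
  {u | G.dist v u ≤ ENNReal.ofReal ρ}

/-- The reverse digraph, obtained by reversing every edge. -/
def rev (G : WDigraph V) : WDigraph V where
  Adj a b := G.Adj b a
  len a b := G.len b a

end WDigraph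

/-- The truncated exponential distribution on `[0, Δ·ln n)` with density
`p(x) = (n/(n−1))·(1/Δ)·e^{−x/Δ}`. -/
noncomputable def truncExp (n : ℕ) (Δ : ℝ) : Measure ℝ :=
  (volume.restrict (Set.Ico 0 (Δ * Real.log n))).withDensity
    fun x => ENNReal.ofReal (((n : ℝ) / ((n : ℝ) - 1)) * (1 / Δ) * Real.exp (-x / Δ))

/-- Extend a finite tuple of radii to a sequence (values beyond `N` are irrelevant). -/
def extRadii {N : ℕ} (ω : Fin N → ℝ) : ℕ → ℝ :=
  fun i => if h : i < N then ω ⟨i, h⟩ else 0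

open Classical in
/-- The first element of the list `Q` that does not belong to `S`. -/
noncomputable def firstNotIn {V : Type} (Q : List V) (S : Set V) : Option V :=
  Q.find? fun a => decide (a ∉ S)

/-- The set of vertices marked before step `i` of one stage of
`Path-Quasipartition`: at each step, the center is the first vertex of the traversal
order `Q.reverse` that is not yet marked, and the ball of the next random radius
around it is marked. -/
noncomputable def pqM {V : Type} (G : WDigraph V) (Q : List V) (r : ℕ → ℝ) : ℕ → Set V
  | 0 => ∅
  | i + 1 =>
      pqM G Q r i ∪
        (match firstNotIn Q.reverse (pqM G Q r i) with
          | none => ∅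
          | some a => G.ball a (r i))

/-- The cluster `B_{i+1}` created at step `i` of one stage of `Path-Quasipartition`:
the ball around the current center minus all previously created clusters. -/
noncomputable def pqB {V : Type} (G : WDigraph V) (Q : List V) (r : ℕ → ℝ) (i : ℕ) :
    Set V :=
  (match firstNotIn Q.reverse (pqM G Q r i) with
    | none => ∅
    | some a => G.ball a (r i)) \ pqM G Q r i

/-- The cutset `C = F ∪ F'` produced by `Path-Quasipartition (G, Q, Δ)` from the two
sequences of radii `r` (Step 1, balls away from `Q`, traversing `Q` backwards) and `r'`
(Step 2, balls towards `Q` in the reverse digraph, traversing `Q` forward):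
`F` consists of all edges leaving some `B_i`, and `F'` of all edges entering some `B'_i`. -/
noncomputable def pqC {V : Type} (G : WDigraph V) (Q : List V) (r r' : ℕ → ℝ) :
    Set (V × V) :=
  (⋃ i : ℕ, {e : V × V | G.Adj e.1 e.2 ∧ e.1 ∈ pqB G Q r i ∧ e.2 ∉ pqB G Q r i}) ∪
  (⋃ i : ℕ, {e : V × V | G.Adj e.1 e.2 ∧ e.2 ∈ pqB G.rev Q.reverse r' i ∧
      e.1 ∉ pqB G.rev Q.reverse r' i})

/-- The randomness of `Path-Quasipartition`: two independent sequences of `N` radii,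
each i.i.d. with the truncated exponential distribution. -/
noncomputable def pqMeasure (N : ℕ) (Δ : ℝ) : Measure ((Fin N → ℝ) × (Fin N → ℝ)) :=
  (Measure.pi fun _ => truncExp N Δ).prod (Measure.pi fun _ => truncExp N Δ)


/-!
Every vertex `w` of `Q` is eventually covered by a Step 1 cluster `B_i` and by a Step 2 cluster
`B'_j`. Since centers are the first uncovered vertices along the traversal, the center `a` of
`B_i` lies after `w` on `Q` and the center `a'` of `B'_j` before it, so `d(w, a)` and `d(a', w)`
are at most `len Q ≤ Δ`. A walk through `w` that avoids `C` can neither leave `B_i` after `w`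
nor enter `B'_j` before `w`; hence `y ∈ B_i` and `x ∈ B'_j`, so `d(a, y)` and `d(x, a')` are at
most `Δ ln n`, because almost surely every radius is below `Δ ln n`. Altogether
`d(x, y) ≤ 2Δ + 2Δ ln n ≤ 5Δ ln n` for `n ≥ 2`.
-/

namespace List

variable {α : Type} {R : α → α → Prop} {l : List α}

theorem isChain_iff_forall_mem_zip_tail : l.IsChain R ↔ ∀ e ∈ l.zip l.tail, R e.1 e.2 := by
  induction l with
  | nil => simp
  | cons a t ih =>
    cases t with
    | nil => simp
    | cons b t => simp_all [isChain_cons_cons]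

theorem IsChain.mem_of_mem_of_getLast? {S : Set α} (h : l.IsChain R)
    (hS : ∀ a b, R a b → a ∈ S → b ∈ S) {y z : α} (hy : l.getLast? = some y)
    (hz : z ∈ l) (hzS : z ∈ S) : y ∈ S :=
  h.backwards_induction (fun c => c ∈ S → y ∈ S) l (fun a b hab hb ha => hb (hS a b hab ha))
    (fun hl hlS => by rw [getLast?_eq_some_getLast hl, Option.some_inj] at hy; rwa [← hy])
    z hz hzS

theorem IsChain.mem_of_mem_of_head? {S : Set α} (h : l.IsChain R)
    (hS : ∀ a b, R a b → b ∈ S → a ∈ S) {x z : α} (hx : l.head? = some x)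
    (hz : z ∈ l) (hzS : z ∈ S) : x ∈ S :=
  h.induction (fun c => c ∈ S → x ∈ S) l (fun a b hab ha hb => ha (hS a b hab hb))
    (fun hl hlS => by rw [head?_eq_some_head hl, Option.some_inj] at hx; rwa [← hx])
    z hz hzS

end List

namespace WDigraph

variable {V : Type} {G : WDigraph V}

theorem walkLen_cons {a b : V} {p : List V} (hp : p.head? = some b) :
    G.walkLen (a :: p) = G.len a b + G.walkLen p := by
  cases p with
  | nil => simp at hp
  | cons c t =>
    obtain rfl : c = b := by simpa using hp
    simp [walkLen]

theorem walkLen_append_tail {p q : List V} {z : V} (hp : p.getLast? = some z)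
    (hq : q.head? = some z) : G.walkLen (p ++ q.tail) = G.walkLen p + G.walkLen q := by
  induction p with
  | nil => simp at hp
  | cons a t ih =>
    cases t with
    | nil =>
      obtain rfl : a = z := by simpa using hp
      cases q with
      | nil => simp at hq
      | cons c q =>
        obtain rfl : c = a := by simpa using hq
        simp [walkLen]
    | cons b t =>
      rw [List.getLast?_cons_cons] at hp
      rw [List.cons_append, walkLen_cons (b := b) rfl, walkLen_cons (b := b) rfl, ih hp,
        add_assoc]

theorem walkLen_le_walkLen_append (p s : List V) : G.walkLen p ≤ G.walkLen (p ++ s) := by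
  cases hp : p.getLast? with
  | none => simp_all [walkLen]
  | some z =>
    calc G.walkLen p ≤ G.walkLen p + G.walkLen (z :: s) := le_self_add
      _ = G.walkLen (p ++ s) := (walkLen_append_tail hp rfl).symm

theorem IsWalk.append {x y z : V} {p q : List V} (hp : G.IsWalk x z p) (hq : G.IsWalk z y q) :
    G.IsWalk x y (p ++ q.tail) := by
  obtain ⟨hpc, hph, hpl⟩ := hp
  obtain ⟨hqc, hqh, hql⟩ := hq
  cases q with
  | nil => simp at hqh
  | cons c q =>
    obtain rfl : c = z := by simpa using hqh
    obtain ⟨hjoin, hqc⟩ := List.isChain_cons.mp hqc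
    refine ⟨List.isChain_append.mpr ⟨hpc, hqc, fun a ha b hb => ?_⟩, ?_, ?_⟩
    · obtain rfl : a = c := by simpa [hpl] using ha.symm
      exact hjoin b hb
    · cases p <;> simp_all
    · cases q <;> simp_all [List.getLast?_append]

theorem dist_le_walkLen {u v : V} {p : List V} (h : G.IsWalk u v p) :
    G.dist u v ≤ G.walkLen p :=
  iInf₂_le p h

theorem dist_self (u : V) : G.dist u u = 0 :=
  nonpos_iff_eq_zero.mp (dist_le_walkLen (p := [u]) ⟨List.isChain_singleton u, rfl, rfl⟩)

theorem dist_triangle (x z y : V) : G.dist x y ≤ G.dist x z + G.dist z y := by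
  simp only [dist, ENNReal.iInf_add, ENNReal.add_iInf]
  refine le_iInf₂ fun q hq => le_iInf₂ fun p hp => ?_
  refine (iInf₂_le _ (hp.append hq)).trans_eq ?_
  rw [walkLen_append_tail hp.2.2 hq.2.1, ENNReal.coe_add]

theorem dist_le_walkLen_of_mem {m : List V} {w a : V} (hm : m.IsChain G.Adj) (hw : w ∈ m)
    (ha : m.getLast? = some a) : G.dist w a ≤ G.walkLen m := by
  obtain ⟨l, s, rfl⟩ := List.append_of_mem hw
  have hwalk : G.IsWalk w a (w :: s) :=
    ⟨hm.right_of_append, rfl, by simpa [List.getLast?_append] using ha⟩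
  refine (dist_le_walkLen hwalk).trans (ENNReal.coe_le_coe.mpr ?_)
  calc G.walkLen (w :: s) ≤ G.walkLen (l ++ [w]) + G.walkLen (w :: s) := le_add_self
    _ = G.walkLen (l ++ w :: s) := by rw [← walkLen_append_tail (by simp) rfl]; simp

theorem rev_rev : G.rev.rev = G := rfl

theorem walkLen_rev_reverse (p : List V) : G.rev.walkLen p.reverse = G.walkLen p := by
  induction p with
  | nil => rfl
  | cons a t ih =>
    cases t with
    | nil => rfl
    | cons b t =>
      rw [List.reverse_cons, ← List.tail_cons (a := b) (as := [a]),
        walkLen_append_tail (z := b) (by simp) rfl, ih,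
        walkLen_cons (a := a) (p := b :: t) rfl, add_comm]
      simp [walkLen, rev]

theorem IsWalk.reverse {u v : V} {p : List V} (h : G.rev.IsWalk u v p) :
    G.IsWalk v u p.reverse :=
  ⟨List.isChain_reverse.mpr h.1, by simpa using h.2.2, by simpa using h.2.1⟩

theorem dist_le_rev_dist (u v : V) : G.dist v u ≤ G.rev.dist u v :=
  le_iInf₂ fun p hp => (dist_le_walkLen hp.reverse).trans_eq
    (by rw [← walkLen_rev_reverse (G := G.rev), rev_rev])

end WDigraph

theorem firstNotIn_eq_some {V : Type} {T : List V} {S : Set V} {a : V}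
    (h : firstNotIn T S = some a) :
    a ∉ S ∧ ∃ t₁ t₂, T = t₁ ++ a :: t₂ ∧ ∀ x ∈ t₁, x ∈ S := by
  rw [firstNotIn, List.find?_eq_some_iff_append] at h
  obtain ⟨ha, t₁, t₂, rfl, ht₁⟩ := h
  exact ⟨by simpa using ha, t₁, t₂, rfl, fun x hx => by simpa using ht₁ x hx⟩

theorem firstNotIn_isSome {V : Type} {T : List V} {S : Set V} {b : V} (hb : b ∈ T)
    (hbS : b ∉ S) : ∃ a, firstNotIn T S = some a := by
  rw [← Option.isSome_iff_exists, firstNotIn, List.find?_isSome]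
  exact ⟨b, hb, by simpa using hbS⟩

open WDigraph in
theorem dist_le_walkLen_of_firstNotIn {V : Type} {G : WDigraph V} {Q : List V} {S : Set V}
    {a w : V} (hQ : Q.IsChain G.Adj) (ha : firstNotIn Q.reverse S = some a) (hw : w ∈ Q)
    (hwS : w ∉ S) : G.dist w a ≤ G.walkLen Q := by
  obtain ⟨-, t₁, t₂, hsplit, ht₁⟩ := firstNotIn_eq_some ha
  have hQ_eq : Q = (t₂.reverse ++ [a]) ++ t₁.reverse := by
    rw [← List.reverse_reverse Q, hsplit]; simp
  have hw' : w ∈ t₂.reverse ++ [a] := by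
    rw [hQ_eq] at hw
    exact (List.mem_append.mp hw).resolve_right fun h => hwS (ht₁ w (List.mem_reverse.mp h))
  rw [hQ_eq] at hQ ⊢
  exact (dist_le_walkLen_of_mem hQ.left_of_append hw' (by simp)).trans
    (ENNReal.coe_le_coe.mpr (walkLen_le_walkLen_append _ _))

section PathQuasipartition

variable {V : Type} {G : WDigraph V} {Q : List V} {r r' : ℕ → ℝ}

theorem pqM_succ (i : ℕ) :
    pqM G Q r (i + 1) = pqM G Q r i ∪
      (match firstNotIn Q.reverse (pqM G Q r i) with
        | none => ∅
        | some a => G.ball a (r i)) := rfl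

theorem pqM_subset_pqM_succ (i : ℕ) : pqM G Q r i ⊆ pqM G Q r (i + 1) :=
  Set.subset_union_left

theorem pqB_eq_diff (i : ℕ) : pqB G Q r i = pqM G Q r (i + 1) \ pqM G Q r i := by
  rw [pqM_succ, Set.union_sdiff_left, pqB]

theorem center_mem_pqM_succ {i : ℕ} {a : V}
    (ha : firstNotIn Q.reverse (pqM G Q r i) = some a) : a ∈ pqM G Q r (i + 1) := by
  rw [pqM_succ, ha]
  exact Or.inr (by simp [WDigraph.ball, WDigraph.dist_self])

open Classical in
/-- Each step marks a new vertex of `Q` as long as `w` is unmarked. -/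
theorem le_card_marked {w : V} (hw : w ∈ Q) :
    ∀ j, w ∉ pqM G Q r j → j ≤ (Q.toFinset.filter (· ∈ pqM G Q r j)).card := by
  intro j
  induction j with
  | zero => exact fun _ => Nat.zero_le _
  | succ j ih =>
    intro hj
    have hj' : w ∉ pqM G Q r j := fun h => hj (pqM_subset_pqM_succ j h)
    obtain ⟨a, ha⟩ := firstNotIn_isSome (List.mem_reverse.mpr hw) hj'
    obtain ⟨haS, t₁, t₂, hsplit, -⟩ := firstNotIn_eq_some ha
    have haQ : a ∈ Q := List.mem_reverse.mp (hsplit ▸ by simp)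
    have hlt : (Q.toFinset.filter (· ∈ pqM G Q r j)).card <
        (Q.toFinset.filter (· ∈ pqM G Q r (j + 1))).card := by
      refine Finset.card_lt_card ((Finset.ssubset_iff_of_subset ?_).mpr ⟨a, ?_, ?_⟩)
      · exact Finset.monotone_filter_right _ fun _ _ hx => pqM_subset_pqM_succ j hx
      · simpa using ⟨haQ, center_mem_pqM_succ ha⟩
      · simp [haS]
    exact Nat.succ_le_of_lt ((ih hj').trans_lt hlt)

theorem mem_pqM_length {w : V} (hw : w ∈ Q) : w ∈ pqM G Q r Q.length := by
  classical
  by_contra hw'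
  have hlt : (Q.toFinset.filter (· ∈ pqM G Q r Q.length)).card < Q.toFinset.card :=
    Finset.card_lt_card ((Finset.ssubset_iff_of_subset (Finset.filter_subset _ _)).mpr
      ⟨w, by simpa using hw, by simp [hw']⟩)
  have hmarked := le_card_marked hw Q.length hw'
  have hcard := List.toFinset_card_le Q
  omega

theorem exists_mem_pqB {w : V} {m : ℕ} (h : w ∈ pqM G Q r m) : ∃ i, w ∈ pqB G Q r i := by
  induction m with
  | zero => exact absurd h (Set.notMem_empty w)
  | succ m ih =>
    by_cases hm : w ∈ pqM G Q r m
    · exact ih hm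
    · exact ⟨m, by rw [pqB_eq_diff]; exact ⟨h, hm⟩⟩

theorem exists_pqB_center (hQ : Q.IsChain G.Adj) {w : V} (hw : w ∈ Q) :
    ∃ i a, w ∈ pqB G Q r i ∧ pqB G Q r i ⊆ G.ball a (r i) ∧
      G.dist w a ≤ G.walkLen Q := by
  obtain ⟨i, hwB⟩ := exists_mem_pqB (mem_pqM_length (r := r) (G := G) hw)
  cases ha : firstNotIn Q.reverse (pqM G Q r i) with
  | none => simp [pqB, ha] at hwB
  | some a =>
    have hB : pqB G Q r i ⊆ G.ball a (r i) := fun x hx => by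
      rw [pqB, ha] at hx; exact hx.1
    have hw_unmarked : w ∉ pqM G Q r i := by rw [pqB_eq_diff] at hwB; exact hwB.2
    exact ⟨i, a, hwB, hB, dist_le_walkLen_of_firstNotIn hQ ha hw hw_unmarked⟩

theorem mem_pqB_of_notMem_pqC {i : ℕ} {u v : V} (huv : G.Adj u v)
    (hC : (u, v) ∉ pqC G Q r r') (hu : u ∈ pqB G Q r i) : v ∈ pqB G Q r i := by
  by_contra hv
  exact hC (Or.inl (Set.mem_iUnion.mpr ⟨i, huv, hu, hv⟩))

theorem mem_pqB_rev_of_notMem_pqC {j : ℕ} {u v : V} (huv : G.Adj u v)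
    (hC : (u, v) ∉ pqC G Q r r') (hv : v ∈ pqB G.rev Q.reverse r' j) :
    u ∈ pqB G.rev Q.reverse r' j := by
  by_contra hu
  exact hC (Or.inr (Set.mem_iUnion.mpr ⟨j, huv, hv, hu⟩))

open WDigraph in
theorem dist_le_of_walk_avoiding_pqC {L : ℝ} (hQ : Q.IsChain G.Adj) (hr : ∀ i, r i ≤ L)
    (hr' : ∀ i, r' i ≤ L) {x y w : V} {p : List V} (hp : G.IsWalk x y p)
    (havoid : ∀ e ∈ p.zip p.tail, e ∉ pqC G Q r r') (hwp : w ∈ p) (hwQ : w ∈ Q) :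
    G.dist x y ≤ 2 * (G.walkLen Q + ENNReal.ofReal L) := by
  have hpC : p.IsChain fun u v => G.Adj u v ∧ (u, v) ∉ pqC G Q r r' :=
    List.isChain_iff_forall_mem_zip_tail.mpr fun e he =>
      ⟨List.isChain_iff_forall_mem_zip_tail.mp hp.1 e he, havoid e he⟩
  obtain ⟨i, a, hwB, hBa, hwa⟩ := exists_pqB_center (r := r) hQ hwQ
  obtain ⟨j, a', hwB', hBa', hwa'⟩ := exists_pqB_center (G := G.rev) (r := r')
    (List.isChain_reverse.mpr hQ) (List.mem_reverse.mpr hwQ)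
  have hy : y ∈ pqB G Q r i :=
    hpC.mem_of_mem_of_getLast? (fun _ _ h => mem_pqB_of_notMem_pqC h.1 h.2) hp.2.2 hwp hwB
  have hx : x ∈ pqB G.rev Q.reverse r' j :=
    hpC.mem_of_mem_of_head? (fun _ _ h => mem_pqB_rev_of_notMem_pqC h.1 h.2) hp.2.1 hwp hwB'
  have hay : G.dist a y ≤ ENNReal.ofReal L := (hBa hy).trans (ENNReal.ofReal_le_ofReal (hr i))
  have hxa' : G.dist x a' ≤ ENNReal.ofReal L :=
    (dist_le_rev_dist _ _).trans ((hBa' hx).trans (ENNReal.ofReal_le_ofReal (hr' j)))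
  have ha'w : G.dist a' w ≤ G.walkLen Q :=
    (dist_le_rev_dist _ _).trans (hwa'.trans_eq (by rw [walkLen_rev_reverse]))
  calc G.dist x y ≤ G.dist x a' + (G.dist a' w + (G.dist w a + G.dist a y)) :=
        (dist_triangle x a' y).trans (add_le_add_right ((dist_triangle a' w y).trans
          (add_le_add_right (dist_triangle w a y) _)) _)
    _ ≤ ENNReal.ofReal L + (G.walkLen Q + (G.walkLen Q + ENNReal.ofReal L)) := by gcongr
    _ = 2 * (G.walkLen Q + ENNReal.ofReal L) := by ring

end PathQuasipartition

instance (n : ℕ) (Δ : ℝ) : IsFiniteMeasure (truncExp n Δ) :=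
  isFiniteMeasure_withDensity_ofReal
    ((Continuous.integrableOn_Icc (by fun_prop)).mono_set Set.Ico_subset_Icc_self).2

theorem ae_truncExp_mem_Ico (n : ℕ) (Δ : ℝ) :
    ∀ᵐ x ∂truncExp n Δ, x ∈ Set.Ico 0 (Δ * Real.log n) :=
  (withDensity_absolutelyContinuous _ _).ae_le (ae_restrict_mem measurableSet_Ico)

theorem ae_pqMeasure_radii_mem_Ico (N : ℕ) (Δ : ℝ) :
    ∀ᵐ ω ∂pqMeasure N Δ, (∀ i, ω.1 i ∈ Set.Ico 0 (Δ * Real.log N)) ∧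
      ∀ i, ω.2 i ∈ Set.Ico 0 (Δ * Real.log N) := by
  have h : ∀ᵐ f ∂Measure.pi fun _ : Fin N => truncExp N Δ,
      ∀ i, f i ∈ Set.Ico 0 (Δ * Real.log N) :=
    ae_all_iff.2 fun _ => Measure.tendsto_eval_ae_ae.eventually (ae_truncExp_mem_Ico N Δ)
  exact (Measure.quasiMeasurePreserving_fst.ae h).and (Measure.quasiMeasurePreserving_snd.ae h)

theorem extRadii_le {N : ℕ} {ω : Fin N → ℝ} {L : ℝ} (hL : 0 ≤ L) (hω : ∀ i, ω i ≤ L)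
    (i : ℕ) : extRadii ω i ≤ L := by
  unfold extRadii
  split_ifs
  exacts [hω _, hL]

/-- **Boundedness near the path for `Path-Quasipartition` (Lemma 4.1(2)).**
There is a universal constant `c₀` such that for every digraph `H` on `n ≥ 2` vertices
with nonnegative edge lengths, every `Δ > 0` and every shortest path `Q` of length at
most `Δ`, with probability 1 the following holds for the random cutset `C` of
`Path-Quasipartition (H, Q, Δ)`: whenever there is a directed path from `x` to `y` in
`H∖C` sharing a vertex with `Q`, we have `d_H(x,y) ≤ c₀·Δ·log n`. -/
theorem path_quasipartition_bounded_near_path :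
    ∃ c₀ : ℝ, 0 < c₀ ∧
      ∀ (V : Type) [Fintype V] (G : WDigraph V), 2 ≤ Fintype.card V →
      ∀ (Δ : ℝ), 0 < Δ →
      ∀ (Q : List V) (hQ : Q ≠ []), Q.Nodup →
        G.IsWalk (Q.head hQ) (Q.getLast hQ) Q →
        (G.walkLen Q : ℝ≥0∞) = G.dist (Q.head hQ) (Q.getLast hQ) →
        (G.walkLen Q : ℝ) ≤ Δ →
        pqMeasure (Fintype.card V) Δ
            {ω | ¬ ∀ x y : V,
              (∃ p : List V, G.IsWalk x y p ∧
                (∀ e ∈ p.zip p.tail, e ∉ pqC G Q (extRadii ω.1) (extRadii ω.2)) ∧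
                ∃ w ∈ p, w ∈ Q) →
              G.dist x y ≤ ENNReal.ofReal (c₀ * Δ * Real.log (Fintype.card V))}
          = 0 := by
  refine ⟨5, by norm_num, fun V _ G hcard Δ hΔ Q _ _ hwalk _ hlen => ae_iff.1 ?_⟩
  set N := Fintype.card V
  have hlog : 2 / 3 ≤ Real.log N := by
    have : Real.log 2 ≤ Real.log N := Real.log_le_log (by norm_num) (by exact_mod_cast hcard)
    linarith [Real.log_two_gt_d9]
  have hL : 0 ≤ Δ * Real.log N := by positivity
  filter_upwards [ae_pqMeasure_radii_mem_Ico N Δ] with ω ⟨h₁, h₂⟩ x y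
    ⟨p, hp, havoid, w, hwp, hwQ⟩
  calc G.dist x y ≤ 2 * (G.walkLen Q + ENNReal.ofReal (Δ * Real.log N)) :=
        dist_le_of_walk_avoiding_pqC hwalk.1 (extRadii_le hL fun i => (h₁ i).2.le)
          (extRadii_le hL fun i => (h₂ i).2.le) hp havoid hwp hwQ
    _ ≤ ENNReal.ofReal (2 * (Δ + Δ * Real.log N)) := by
        rw [ENNReal.ofReal_mul zero_le_two, ENNReal.ofReal_add hΔ.le hL, ENNReal.ofReal_ofNat]
        gcongr
        exact (ENNReal.ofReal_coe_nnreal).symm.trans_le (ENNReal.ofReal_le_ofReal hlen)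
    _ ≤ ENNReal.ofReal (5 * Δ * Real.log N) := ENNReal.ofReal_le_ofReal (by nlinarith)
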